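/- If f is a nice formula, then its avoidability exponent satisfies AE(f) ≥ 1 + 2^{1-v(f)}, where v(f) is the number of variables of f. That is, every (1 + 2^{1-v(f)})-free word avoids f. -/
import Mathlib

/-- The finite factor of the infinite word `w` starting at position `i` of length `n`. -/
def extract {α : Type*} (w : ℕ → α) (i n : ℕ) : List α :=
  (List.range n).map (fun k => w (i + k))

/-- `u` is a (finite) factor of the infinite word `w`. -/
def IsFactorOf {α : Type*} (u : List α) (w : ℕ → α) : Prop :=
  ∃ i, u = extract w i u.length

/-- A morphism (given on variables/letters) is non-erasing. -/
def NonErasing {V α : Type*} (h : V → List α) : Prop := ∀ v, h v ≠ []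

/-- The image of a pattern `p` under the morphism induced by `h`. -/
def patImage {V α : Type*} (h : V → List α) (p : List V) : List α :=
  (p.map h).flatten

/-- `h` is an occurrence of the formula `f` (a set of fragments) in the infinite word `w`:
`h` is non-erasing and the `h`-image of every fragment of `f` is a factor of `w`. -/
def OccursIn {V α : Type*} (f : Set (List V)) (h : V → List α) (w : ℕ → α) : Prop :=
  NonErasing h ∧ ∀ p ∈ f, IsFactorOf (patImage h p) w

/-- The infinite word `w` avoids the formula `f`. -/
def Avoids {V α : Type*} (w : ℕ → α) (f : Set (List V)) : Prop :=
  ∀ h : V → List α, ¬ OccursIn f h w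

/-- An infinite word is recurrent if every factor occurs infinitely often. -/
def Recurrent {α : Type*} (w : ℕ → α) : Prop :=
  ∀ u : List α, IsFactorOf u w → ∀ N, ∃ i ≥ N, u = extract w i u.length

/-- An infinite word is square-free if it has no factor `uu` with `u` nonempty. -/
def SquareFree {α : Type*} (w : ℕ → α) : Prop :=
  ∀ u : List α, u ≠ [] → ¬ IsFactorOf (u ++ u) w

/-- The formula `f'` divides the formula `f`: some non-erasing morphism maps every
fragment of `f'` to a factor of some fragment of `f`. -/
def Divides {V' V : Type*} (f' : Set (List V')) (f : Set (List V)) : Prop :=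
  ∃ h : V' → List V, NonErasing h ∧ ∀ q ∈ f', ∃ p ∈ f, patImage h q <:+: p

/-- The avoidability index of a formula: the least alphabet size over which there is an
infinite word avoiding it. -/
noncomputable def lamIdx {V : Type*} (f : Set (List V)) : ℕ :=
  sInf {n : ℕ | ∃ w : ℕ → Fin n, Avoids w f}

/-- A formula is avoidable if some infinite word over some finite alphabet avoids it. -/
def Avoidable {V : Type*} (f : Set (List V)) : Prop :=
  ∃ (n : ℕ) (w : ℕ → Fin n), Avoids w f

/-- An infinite word is `r`-free: every factor of the form `x ++ y ++ x` with `x ≠ []`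
(a repetition of period `|xy|` and exponent `|xyx|/|xy|`) has exponent `< r`. -/
def AlphaFree {α : Type*} (w : ℕ → α) (r : ℝ) : Prop :=
  ∀ x y : List α, x ≠ [] → IsFactorOf (x ++ y ++ x) w →
    ((2 * x.length + y.length : ℝ) / (x.length + y.length)) < r

/-- An infinite word is `r⁺`-free: every such repetition has exponent `≤ r`. -/
def AlphaPlusFree {α : Type*} (w : ℕ → α) (r : ℝ) : Prop :=
  ∀ x y : List α, x ≠ [] → IsFactorOf (x ++ y ++ x) w →
    ((2 * x.length + y.length : ℝ) / (x.length + y.length)) ≤ r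

/-- A finite word is `r⁺`-free. -/
def AlphaPlusFreeList {α : Type*} (u : List α) (r : ℝ) : Prop :=
  ∀ x y : List α, x ≠ [] → (x ++ y ++ x) <:+: u →
    ((2 * x.length + y.length : ℝ) / (x.length + y.length)) ≤ r

/-! ### Auxiliary lemmas -/

/-- First-occurrence split of a list at a member. -/
lemma first_occ {α : Type*} (a : α) : ∀ l : List α, a ∈ l → ∃ s t, l = s ++ a :: t ∧ a ∉ s := by
  intro l
  induction l with
  | nil => intro h; simp at h
  | cons b l ih =>
    intro h
    by_cases hb : a = b
    · exact ⟨[], l, by simp [hb], by simp⟩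
    · have : a ∈ l := by
        rcases List.mem_cons.mp h with h' | h'
        · exact absurd h' hb
        · exact h'
      obtain ⟨s, t, rfl, hs⟩ := ih this
      exact ⟨b :: s, t, by simp, by simp [hs, hb]⟩

/-- Between two occurrences of a letter there is a gap avoiding that letter. -/
lemma gap_split {α : Type*} [DecidableEq α] (a : α) (l : List α) (h : 2 ≤ l.count a) :
    ∃ u, ([a] ++ u ++ [a]) <:+: l ∧ a ∉ u := by
  have hmem : a ∈ l := List.count_pos_iff.mp (by omega)
  obtain ⟨s, t, rfl, hs⟩ := first_occ a l hmem
  have hts : s.count a = 0 := List.count_eq_zero.mpr hs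
  have ht : 1 ≤ t.count a := by
    rw [List.count_append, hts, List.count_cons_self] at h
    omega
  have hmem' : a ∈ t := List.count_pos_iff.mp (by omega)
  obtain ⟨u, t', rfl, hu⟩ := first_occ a t hmem'
  refine ⟨u, ⟨s, t', ?_⟩, hu⟩
  simp

/-- A word with no doubled (nonempty) infix is short: its length is less than
`2 ^ (number of its distinct letters)`. -/
lemma len_bound {V : Type*} [DecidableEq V] :
    ∀ (n : ℕ) (q : List V), q.length ≤ n →
      (∀ d, d <:+: q → d = [] ∨ ∃ y ∈ d, d.count y ≤ 1) →
      q.length + 1 ≤ 2 ^ q.toFinset.card := by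
  intro n
  induction n with
  | zero =>
    intro q hq _
    have : q = [] := List.length_eq_zero_iff.mp (by omega)
    subst this; simp
  | succ n ih =>
    intro q hq H
    rcases eq_or_ne q [] with rfl | hne
    · simp
    · rcases H q (List.infix_refl q) with h | ⟨y, hy, hcy⟩
      · exact absurd h hne
      have hcy1 : q.count y = 1 := by
        have := List.count_pos_iff.mpr hy; omega
      obtain ⟨s, t, rfl, hs⟩ := first_occ y q hy
      have hsc : s.count y = 0 := List.count_eq_zero.mpr hs
      have htc : t.count y = 0 := by
        rw [List.count_append, hsc, List.count_cons_self] at hcy1; omega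
      have hts : y ∉ t := List.count_eq_zero.mp htc
      have hlen : (s ++ y :: t).length = s.length + t.length + 1 := by simp; omega
      have hls : s.length ≤ n := by omega
      have hlt : t.length ≤ n := by omega
      have Hs : ∀ d, d <:+: s → d = [] ∨ ∃ z ∈ d, d.count z ≤ 1 :=
        fun d hd => H d (hd.trans (s.prefix_append (y :: t)).isInfix)
      have Ht : ∀ d, d <:+: t → d = [] ∨ ∃ z ∈ d, d.count z ≤ 1 :=
        fun d hd => H d (hd.trans ((t.suffix_cons y).trans
          (List.suffix_append s (y :: t))).isInfix)
      have bs := ih s hls Hs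
      have bt := ih t hlt Ht
      set c := (s ++ y :: t).toFinset.card with hc
      have hyq : y ∈ (s ++ y :: t).toFinset := by simp
      have hc1 : 1 ≤ c := Finset.card_pos.mpr ⟨y, hyq⟩
      have hss : s.toFinset ⊆ ((s ++ y :: t).toFinset).erase y := by
        intro z hz
        rw [Finset.mem_erase]
        have hzs : z ∈ s := List.mem_toFinset.mp hz
        exact ⟨fun h => hs (h ▸ hzs), by simp [hzs]⟩
      have hst : t.toFinset ⊆ ((s ++ y :: t).toFinset).erase y := by
        intro z hz
        rw [Finset.mem_erase]
        have hzs : z ∈ t := List.mem_toFinset.mp hz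
        exact ⟨fun h => hts (h ▸ hzs), by simp [hzs]⟩
      have hce : (((s ++ y :: t).toFinset).erase y).card = c - 1 :=
        Finset.card_erase_of_mem hyq
      have hcs : s.toFinset.card ≤ c - 1 := hce ▸ Finset.card_le_card hss
      have hct : t.toFinset.card ≤ c - 1 := hce ▸ Finset.card_le_card hst
      have ps : 2 ^ s.toFinset.card ≤ 2 ^ (c - 1) := Nat.pow_le_pow_right (by norm_num) hcs
      have pt : 2 ^ t.toFinset.card ≤ 2 ^ (c - 1) := Nat.pow_le_pow_right (by norm_num) hct
      have h2 : 2 ^ (c - 1) * 2 = 2 ^ c := by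
        rw [← pow_succ]; congr 1; omega
      omega

/-- A long enough word contains a doubled factor. -/
lemma exists_doubled {V : Type*} [DecidableEq V] (q : List V)
    (hq : 2 ^ q.toFinset.card ≤ q.length) :
    ∃ d, d ≠ [] ∧ d <:+: q ∧ ∀ y ∈ d, 2 ≤ d.count y := by
  by_contra hcon
  push_neg at hcon
  have := len_bound q.length q le_rfl (fun d hd => by
    rcases eq_or_ne d [] with rfl | hne
    · exact Or.inl rfl
    · obtain ⟨y, hy, hcy⟩ := hcon d hne hd
      exact Or.inr ⟨y, hy, by omega⟩)
  omega

lemma extract_length {α : Type*} (w : ℕ → α) (i n : ℕ) : (extract w i n).length = n := by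
  simp [extract]

lemma extract_add {α : Type*} (w : ℕ → α) (i m n : ℕ) :
    extract w i (m + n) = extract w i m ++ extract w (i + m) n := by
  simp only [extract, List.range_add, List.map_append, List.map_map]
  congr 1
  apply List.map_congr_left
  intro k _
  simp [Function.comp]
  congr 1
  omega

lemma factor_of_infix {α : Type*} {u v : List α} {w : ℕ → α}
    (h : u <:+: v) (hf : IsFactorOf v w) : IsFactorOf u w := by
  obtain ⟨s, t, rfl⟩ := h
  obtain ⟨i, hi⟩ := hf
  rw [List.length_append, List.length_append] at hi
  rw [extract_add, extract_add] at hi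
  have h1 := List.append_inj hi (by simp [extract_length])
  have h2 := List.append_inj h1.1 (by simp [extract_length])
  exact ⟨i + s.length, h2.2⟩

lemma patImage_append {V α : Type*} (h : V → List α) (a b : List V) :
    patImage h (a ++ b) = patImage h a ++ patImage h b := by
  simp [patImage]

lemma patImage_singleton {V α : Type*} (h : V → List α) (a : V) :
    patImage h [a] = h a := by
  simp [patImage]

lemma patImage_infix {V α : Type*} (h : V → List α) {a b : List V} (hab : a <:+: b) :
    patImage h a <:+: patImage h b := by
  obtain ⟨s, t, rfl⟩ := hab
  exact ⟨patImage h s, patImage h t, by rw [← patImage_append, ← patImage_append]⟩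

lemma patImage_length_le {V α : Type*} (h : V → List α) (m : ℕ) :
    ∀ q : List V, (∀ y ∈ q, (h y).length ≤ m) → (patImage h q).length ≤ q.length * m := by
  intro q
  induction q with
  | nil => simp [patImage]
  | cons a q ih =>
    intro hq
    have : patImage h (a :: q) = h a ++ patImage h q := by
      simp [patImage]
    rw [this, List.length_append, List.length_cons]
    have h1 : (h a).length ≤ m := hq a (by simp)
    have h2 := ih (fun y hy => hq y (by simp [hy]))
    nlinarith

/-- The numeric contradiction: a repetition `x y x` with `|y| ≤ (2^(v-1)-1)|x|` has
exponent at least `1 + 2^(1-v)`. -/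
lemma numeric_contra {β : Type*} {w : ℕ → β} {v : ℕ} (hv : 1 ≤ v)
    (hfree : AlphaFree w (1 + (2 : ℝ) ^ ((1 : ℤ) - (v : ℤ))))
    (x y : List β) (hx : x ≠ []) (hf : IsFactorOf (x ++ y ++ x) w)
    (hb : y.length ≤ (2 ^ (v - 1) - 1) * x.length) : False := by
  have hlt := hfree x y hx hf
  have hxx : 1 ≤ x.length := List.length_pos_iff.mpr hx
  set a : ℝ := (x.length : ℝ) with ha
  set b : ℝ := (y.length : ℝ) with hbdef
  have ha1 : (1 : ℝ) ≤ a := by rw [ha]; exact_mod_cast hxx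
  have hb0 : (0 : ℝ) ≤ b := by positivity
  set c : ℝ := (2 : ℝ) ^ (v - 1) with hc
  have hc1 : (1 : ℝ) ≤ c := by
    rw [hc, show (1:ℝ) = 1 ^ (v-1) from (one_pow _).symm]
    exact pow_le_pow_left₀ (by norm_num) (by norm_num) _
  have hc0 : (0 : ℝ) < c := by linarith
  have hzc : (2 : ℝ) ^ ((1 : ℤ) - (v : ℤ)) = c⁻¹ := by
    have hvv : (1 : ℤ) - (v : ℤ) = -((v - 1 : ℕ) : ℤ) := by omega
    rw [hvv, zpow_neg, zpow_natCast]
  rw [hzc] at hlt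
  have hbr : b ≤ (c - 1) * a := by
    have h2 : (1 : ℕ) ≤ 2 ^ (v - 1) := Nat.one_le_two_pow
    calc b = ((y.length : ℕ) : ℝ) := by rw [hbdef]
    _ ≤ ((2 ^ (v - 1) - 1) * x.length : ℕ) := by exact_mod_cast hb
    _ = (c - 1) * a := by push_cast [Nat.cast_sub h2]; simp [hc, ha]
  have hab0 : (0 : ℝ) < a + b := by linarith
  have hkey : 1 + c⁻¹ ≤ (2 * a + b) / (a + b) := by
    rw [le_div_iff₀ hab0]
    have hinv : (0 : ℝ) < c⁻¹ := by positivity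
    have hci : c * c⁻¹ = 1 := mul_inv_cancel₀ (ne_of_gt hc0)
    nlinarith [mul_le_mul_of_nonneg_left hbr (le_of_lt hinv)]
  linarith

/-- Key lemma: in an `(1 + 2^(1-v))`-free word, the image of any pattern over at most
`k` distinct variables is short. -/
lemma key_lemma {V β : Type*} [Fintype V] [DecidableEq V] (w : ℕ → β) (h : V → List β)
    (hne : NonErasing h) (hv : 1 ≤ Fintype.card V)
    (hfree : AlphaFree w (1 + (2 : ℝ) ^ ((1 : ℤ) - (Fintype.card V : ℤ)))) :
    ∀ (k : ℕ) (q : List V), q.toFinset.card ≤ k → IsFactorOf (patImage h q) w →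
      ∀ m : ℕ, (∀ Y ∈ q, (h Y).length ≤ m) → (patImage h q).length ≤ (2 ^ k - 1) * m := by
  intro k
  induction k using Nat.strong_induction_on with
  | _ k ih =>
  intro q hcard hfact m hm
  by_cases hlen : q.length + 1 ≤ 2 ^ k
  · calc (patImage h q).length ≤ q.length * m := patImage_length_le h m q hm
      _ ≤ (2 ^ k - 1) * m := Nat.mul_le_mul_right m (by omega)
  · exfalso
    have hql : 2 ^ q.toFinset.card ≤ q.length := by
      have := Nat.pow_le_pow_right (show 1 ≤ 2 by norm_num) hcard
      omega
    obtain ⟨d, hdne, hdq, hdd⟩ := exists_doubled q hql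
    have hdnef : d.toFinset.Nonempty := ⟨d.head hdne, List.mem_toFinset.mpr (List.head_mem hdne)⟩
    obtain ⟨X, hXd, hXmax⟩ := d.toFinset.exists_max_image (fun Y => (h Y).length) hdnef
    have hXd' : X ∈ d := List.mem_toFinset.mp hXd
    obtain ⟨u, huinf, hXu⟩ := gap_split X d (hdd X hXd')
    have huq : ([X] ++ u ++ [X]) <:+: q := huinf.trans hdq
    have huu : u <:+: q := List.IsInfix.trans (show u <:+: [X] ++ u ++ [X] from ⟨[X], [X], rfl⟩) huq
    have hXq : X ∈ q := hdq.subset hXd'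
    have hqcard1 : 1 ≤ q.toFinset.card := Finset.card_pos.mpr ⟨X, List.mem_toFinset.mpr hXq⟩
    have hsub : u.toFinset ⊆ q.toFinset.erase X := by
      intro z hz
      rw [Finset.mem_erase]
      have hzu : z ∈ u := List.mem_toFinset.mp hz
      exact ⟨fun he => hXu (he ▸ hzu), List.mem_toFinset.mpr (huu.subset hzu)⟩
    have hjk : u.toFinset.card < k := by
      have h1 : u.toFinset.card ≤ q.toFinset.card - 1 :=
        (Finset.card_erase_of_mem (List.mem_toFinset.mpr hXq)) ▸ Finset.card_le_card hsub
      omega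
    have hjv : u.toFinset.card ≤ Fintype.card V - 1 := by
      have hsub2 : u.toFinset ⊆ Finset.univ.erase X := fun z hz =>
        Finset.mem_erase.mpr ⟨fun he => hXu (he ▸ List.mem_toFinset.mp hz), Finset.mem_univ _⟩
      have := Finset.card_le_card hsub2
      rwa [Finset.card_erase_of_mem (Finset.mem_univ X), Finset.card_univ] at this
    have hufact : IsFactorOf (patImage h u) w := factor_of_infix (patImage_infix h huu) hfact
    have hmub : ∀ Y ∈ u, (h Y).length ≤ (h X).length := fun Y hY =>
      hXmax Y (List.mem_toFinset.mpr (huinf.subset (by simp [hY])))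
    have hb := ih u.toFinset.card hjk u le_rfl hufact (h X).length hmub
    have hb2 : (patImage h u).length ≤ (2 ^ (Fintype.card V - 1) - 1) * (h X).length := by
      refine le_trans hb (Nat.mul_le_mul_right _ ?_)
      have := Nat.pow_le_pow_right (show 1 ≤ 2 by norm_num) hjv
      omega
    have hfac : IsFactorOf (h X ++ patImage h u ++ h X) w := by
      have heq : patImage h ([X] ++ u ++ [X]) = h X ++ patImage h u ++ h X := by
        rw [patImage_append, patImage_append, patImage_singleton]
      exact heq ▸ factor_of_infix (patImage_infix h huq) hfact
    exact numeric_contra hv hfree (h X) (patImage h u) (hne X) hfac hb2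

/-- if `f` is a nice formula (every variable occurs at least twice in
some fragment) on the variable set `V`, then every `(1 + 2^(1 - v(f)))`-free word
avoids `f`, i.e. AE(f) ≥ 1 + 2^(1-v(f)) where v(f) = |V|. -/
theorem stmt6 {V : Type*} [Fintype V] [DecidableEq V] [Nonempty V]
    (f : Set (List V)) (hnice : ∀ v : V, ∃ p ∈ f, 2 ≤ p.count v) :
    ∀ (β : Type*) (w : ℕ → β),
      AlphaFree w (1 + (2 : ℝ) ^ ((1 : ℤ) - (Fintype.card V : ℤ))) → Avoids w f := by
  intro β w hfree h hocc
  obtain ⟨hne, hfact⟩ := hocc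
  have hv : 1 ≤ Fintype.card V := Fintype.card_pos
  obtain ⟨X, -, hXmax⟩ := Finset.univ.exists_max_image (fun Y : V => (h Y).length)
    Finset.univ_nonempty
  obtain ⟨p, hp, hcount⟩ := hnice X
  obtain ⟨u, huinf, hXu⟩ := gap_split X p hcount
  have hupf : u <:+: p := List.IsInfix.trans (show u <:+: [X] ++ u ++ [X] from ⟨[X], [X], rfl⟩) huinf
  have hufact : IsFactorOf (patImage h u) w :=
    factor_of_infix (patImage_infix h hupf) (hfact p hp)
  have hjv : u.toFinset.card ≤ Fintype.card V - 1 := by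
    have hsub2 : u.toFinset ⊆ Finset.univ.erase X := fun z hz =>
      Finset.mem_erase.mpr ⟨fun he => hXu (he ▸ List.mem_toFinset.mp hz), Finset.mem_univ _⟩
    have := Finset.card_le_card hsub2
    rwa [Finset.card_erase_of_mem (Finset.mem_univ X), Finset.card_univ] at this
  have hb := key_lemma w h hne hv hfree (Fintype.card V - 1) u hjv hufact (h X).length
    (fun Y _ => hXmax Y (Finset.mem_univ Y))
  have hfac : IsFactorOf (h X ++ patImage h u ++ h X) w := by
    have heq : patImage h ([X] ++ u ++ [X]) = h X ++ patImage h u ++ h X := by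
      rw [patImage_append, patImage_append, patImage_singleton]
    exact heq ▸ factor_of_infix (patImage_infix h huinf) (hfact p hp)
  exact numeric_contra hv hfree (h X) (patImage h u) (hne X) hfac hb
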